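/- arXiv:1110.2706 — 3 statements merged into one kernel-verified Lean document; each statement's English description precedes it below -/
import Mathlib

section
/- For every finite-dimensional A-module M and every d ∈ {1,…,p} there exists a unique A-submodule 𝔎_d(M) ⊆ M such that (a) 𝔎_d(M) lies in EIP_d, and (b) every A-submodule N ⊆ M lying in EIP_d is contained in 𝔎_d(M). -/
/-!
Read inside `M`, the two conditions defining `EIP_d` for a submodule `N` are `u N = 𝔪 N` for
every point operator `u` and `𝔪^d N = 0`. Images under `u` and products with an ideal both
commute with sums of submodules, so both conditions pass to arbitrary sums. Hence the sum of all
`EIP_d` submodules of `M` is again in `EIP_d`, and it is the largest one.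
-/

open MvPolynomial Module

set_option maxHeartbeats 1000000
set_option synthInstance.maxHeartbeats 400000

noncomputable section

/-- The defining ideal `(X^p, Y^p)` of the polynomial ring in two variables. -/
def relI (k : Type) [Field k] (p : ℕ) : Ideal (MvPolynomial (Fin 2) k) :=
  Ideal.span {(X 0 : MvPolynomial (Fin 2) k) ^ p, (X 1 : MvPolynomial (Fin 2) k) ^ p}

/-- The algebra `A = k[X,Y]/(X^p, Y^p)`. -/
abbrev Amod (k : Type) [Field k] (p : ℕ) : Type :=
  MvPolynomial (Fin 2) k ⧸ relI k p

variable (k : Type) [Field k] (p : ℕ)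

/-- `x`, the image of `X` in `A`. -/
def xA : Amod k p := Ideal.Quotient.mk (relI k p) (X 0)

/-- `y`, the image of `Y` in `A`. -/
def yA : Amod k p := Ideal.Quotient.mk (relI k p) (X 1)

/-- The maximal ideal `𝔪 = (x, y)` of `A`. -/
def mA : Ideal (Amod k p) := Ideal.span {xA k p, yA k p}

/-- A point operator: `u = α x + β y` with `(α, β) ≠ (0, 0)`. -/
def IsPointOp (u : Amod k p) : Prop :=
  ∃ α β : k, (α ≠ 0 ∨ β ≠ 0) ∧ u = α • xA k p + β • yA k p

/-- Equal images property: `u M = 𝔪 M` for every point operator `u`. -/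
def EIP (M : Type) [AddCommGroup M] [Module (Amod k p) M] : Prop :=
  ∀ u : Amod k p, IsPointOp k p u →
    LinearMap.range (LinearMap.lsmul (Amod k p) M u)
      = mA k p • (⊤ : Submodule (Amod k p) M)

/-- `M` lies in `EIP_d`: equal images property and `𝔪^d M = 0`. -/
def EIPd (d : ℕ) (M : Type) [AddCommGroup M] [Module (Amod k p) M] : Prop :=
  EIP k p M ∧ (mA k p) ^ d • (⊤ : Submodule (Amod k p) M) = ⊥

namespace Submodule

variable {R M : Type*} [CommRing R] [AddCommGroup M] [Module R M]

theorem map_subtype_range_lsmul (N : Submodule R M) (u : R) :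
    (LinearMap.range (LinearMap.lsmul R N u)).map N.subtype = N.map (LinearMap.lsmul R M u) := by
  have hcomm : N.subtype ∘ₗ LinearMap.lsmul R N u = LinearMap.lsmul R M u ∘ₗ N.subtype := rfl
  rw [LinearMap.range_eq_map, ← map_comp, hcomm, map_comp, map_top, range_subtype]

theorem map_subtype_smul_top (N : Submodule R M) (I : Ideal R) :
    (I • (⊤ : Submodule R N)).map N.subtype = I • N := by
  rw [map_smul'', map_top, range_subtype]

theorem map_lsmul_sSup_eq_smul_sSup {S : Set (Submodule R M)} {u : R} {I : Ideal R}
    (h : ∀ N ∈ S, N.map (LinearMap.lsmul R M u) = I • N) :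
    (sSup S).map (LinearMap.lsmul R M u) = I • sSup S := by
  rw [sSup_eq_iSup', map_iSup, smul_iSup]
  exact iSup_congr fun N => h N N.2

theorem smul_sSup_eq_bot {S : Set (Submodule R M)} {I : Ideal R} (h : ∀ N ∈ S, I • N = ⊥) :
    I • sSup S = ⊥ := by
  rw [sSup_eq_iSup', smul_iSup, iSup_eq_bot]
  exact fun N => h N N.2

end Submodule

theorem EIPd_submodule_iff {M : Type} [AddCommGroup M] [Module (Amod k p) M] (d : ℕ)
    (N : Submodule (Amod k p) M) :
    EIPd k p d N ↔
      (∀ u, IsPointOp k p u → N.map (LinearMap.lsmul (Amod k p) M u) = mA k p • N) ∧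
        mA k p ^ d • N = ⊥ := by
  have hinj := Submodule.map_injective_of_injective N.injective_subtype
  refine and_congr (forall₂_congr fun u _ => ?_) ?_
  · rw [← hinj.eq_iff, Submodule.map_subtype_range_lsmul, Submodule.map_subtype_smul_top]
  · rw [← hinj.eq_iff, Submodule.map_subtype_smul_top, Submodule.map_bot]

theorem EIPd_sSup {M : Type} [AddCommGroup M] [Module (Amod k p) M] {d : ℕ}
    {S : Set (Submodule (Amod k p) M)} (hS : ∀ N ∈ S, EIPd k p d N) : EIPd k p d ↥(sSup S) := by
  simp only [EIPd_submodule_iff] at hS ⊢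
  exact ⟨fun u hu => Submodule.map_lsmul_sSup_eq_smul_sSup fun N hN => (hS N hN).1 u hu,
    Submodule.smul_sSup_eq_bot fun N hN => (hS N hN).2⟩

theorem exists_unique_largest_EIPd_submodule
    (M : Type) [AddCommGroup M] [Module (Amod k p) M]
    (d : ℕ) :
    ∃! K : Submodule (Amod k p) M,
      EIPd k p d K ∧ ∀ N : Submodule (Amod k p) M, EIPd k p d N → N ≤ K := by
  let S : Set (Submodule (Amod k p) M) := {N | EIPd k p d N}
  have hgreatest : IsGreatest S (sSup S) := ⟨EIPd_sSup k p fun _ => id, fun _ => le_sSup⟩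
  exact ⟨sSup S, hgreatest, fun K hK => le_antisymm (hgreatest.2 hK.1) (hK.2 _ hgreatest.1)⟩
end
end

section
/- Let M be an A-module with the equal images property which also has the equal kernels property, i.e., for each j ∈ {1,…,p−1} there is a k-subspace V_j ⊆ M such that ker(u_M^j) = V_j for every point operator u. Then 𝔪M = 0 (equivalently, every point operator acts as zero on M, so M has constant Jordan type (dim_k M)[1]). -/
open MvPolynomial Module

set_option maxHeartbeats 1000000
set_option synthInstance.maxHeartbeats 400000

noncomputable section

variable (k : Type) [Field k] (p : ℕ)

/-!
If `𝔪M ≠ 0`, multiplication by `x` and by `y` are two `k`-linear maps `M → M` with the same kernel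
`V` and the same image `𝔪M ≠ 0`, so both induce isomorphisms `M/V ≅ 𝔪M`. Over the algebraically
closed field `k` the automorphism of `M/V` they define has an eigenvector `m + V`, i.e. `y m = c x m`
for some `c ∈ k` and some `m ∉ V`. Then `m` lies in the kernel of the point operator `y - c x`,
which is `V` again: a contradiction.
-/

open LinearMap in
theorem LinearMap.exists_apply_eq_smul_apply_of_ker_le_of_range_le
    {K M N : Type*} [Field K] [IsAlgClosed K] [AddCommGroup M] [Module K M]
    [FiniteDimensional K M] [AddCommGroup N] [Module K N]
    {F G : M →ₗ[K] N} (hF : F ≠ 0) (hker : ker F ≤ ker G) (hrange : range G ≤ range F) :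
    ∃ (c : K) (m : M), F m ≠ 0 ∧ G m = c • F m := by
  have : Nontrivial (M ⧸ ker F) :=
    Submodule.Quotient.nontrivial_iff.mpr (mt ker_eq_top.mp hF)
  let G' : M →ₗ[K] range F := G.codRestrict (range F) fun m ↦ hrange (mem_range_self G m)
  let Gq : (M ⧸ ker F) →ₗ[K] range F :=
    (ker F).liftQ G' (hker.trans (ker_codRestrict _ _ _).ge)
  let h : Module.End K (M ⧸ ker F) := F.quotKerEquivRange.symm.toLinearMap ∘ₗ Gq
  obtain ⟨c, hc⟩ := Module.End.exists_eigenvalue h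
  obtain ⟨v, hv⟩ := hc.exists_hasEigenvector
  obtain ⟨m, rfl⟩ := Submodule.Quotient.mk_surjective _ v
  refine ⟨c, m, fun hm ↦ hv.2 ((Submodule.Quotient.mk_eq_zero _).mpr hm), ?_⟩
  have := congrArg (fun w ↦ (F.quotKerEquivRange w : N)) hv.apply_eq_smul
  simpa [h, Gq, G'] using this

section

variable {k p}

theorem isPointOp_xA : IsPointOp k p (xA k p) := ⟨1, 0, Or.inl one_ne_zero, by simp⟩

theorem isPointOp_yA : IsPointOp k p (yA k p) := ⟨0, 1, Or.inr one_ne_zero, by simp⟩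

theorem isPointOp_yA_sub_smul_xA (c : k) : IsPointOp k p (yA k p - c • xA k p) :=
  ⟨-c, 1, Or.inr one_ne_zero, by rw [one_smul, neg_smul, sub_eq_neg_add]⟩

theorem EIP.range_restrictScalars_lsmul {M : Type} [AddCommGroup M] [Module (Amod k p) M]
    [Module k M] [IsScalarTower k (Amod k p) M] (hE : EIP k p M) {u : Amod k p}
    (hu : IsPointOp k p u) :
    LinearMap.range ((LinearMap.lsmul (Amod k p) M u).restrictScalars k)
      = (mA k p • (⊤ : Submodule (Amod k p) M)).restrictScalars k := by
  rw [LinearMap.range_restrictScalars, hE u hu]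

end

theorem EIP_and_equalKernels_implies_trivial_action
    [IsAlgClosed k] [Fact p.Prime]
    (M : Type) [AddCommGroup M] [Module (Amod k p) M]
    [Module k M] [IsScalarTower k (Amod k p) M] [FiniteDimensional k M]
    (hE : EIP k p M)
    (hK : ∀ j : ℕ, 1 ≤ j → j ≤ p - 1 → ∃ V : Submodule k M,
      ∀ u : Amod k p, IsPointOp k p u →
        (LinearMap.ker ((LinearMap.lsmul (Amod k p) M u) ^ j)).restrictScalars k = V) :
    mA k p • (⊤ : Submodule (Amod k p) M) = ⊥ := by
  by_contra hN
  let act (u : Amod k p) : M →ₗ[k] M := (LinearMap.lsmul (Amod k p) M u).restrictScalars k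
  obtain ⟨V, hV⟩ := hK 1 le_rfl (Nat.le_sub_one_of_lt (Fact.out : p.Prime).one_lt)
  have hker {u : Amod k p} (hu : IsPointOp k p u) : LinearMap.ker (act u) = V := by
    rw [LinearMap.ker_restrictScalars, ← hV u hu, pow_one]
  have hx : act (xA k p) ≠ 0 := fun h ↦ hN <|
    (Submodule.restrictScalars_eq_bot_iff k _ _).mp <| by
      rw [← hE.range_restrictScalars_lsmul isPointOp_xA]
      exact LinearMap.range_eq_bot.mpr h
  obtain ⟨c, m, hxm, hym⟩ :=
    LinearMap.exists_apply_eq_smul_apply_of_ker_le_of_range_le (G := act (yA k p)) hx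
      (by rw [hker isPointOp_xA, hker isPointOp_yA])
      (by rw [hE.range_restrictScalars_lsmul isPointOp_xA,
        hE.range_restrictScalars_lsmul isPointOp_yA])
  have hm : m ∈ LinearMap.ker (act (yA k p - c • xA k p)) := by
    change (yA k p - c • xA k p) • m = 0
    rw [sub_smul, smul_assoc]
    exact sub_eq_zero.mpr hym
  rw [hker (isPointOp_yA_sub_smul_xA c), ← hker isPointOp_xA] at hm
  exact hxm hm

end
end

section
/- Let 0 → N → E → M → 0 be an exact sequence of A-modules which is locally split in the following sense: for every point operator u there exists a k-subspace X ⊆ E with uX ⊆ X and E = N ⊕ X (identifying N with its image in E). If E lies in EIP_d for some d ∈ {1,…,p}, then both M and N lie in EIP_d. -/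
/-! A quotient `M` of `E` inherits `u M = 𝔪 M` and `𝔪^d M = 0` because `π` commutes with the
action of `A`, and the submodule `N` inherits `𝔪^d N = 0` for free. The only real point is
`𝔪 N ⊆ u N`: if `ι n = u e`, write `e = ι n' + x` with `x` in the `u`-stable complement `X`;
then `u x = ι (n - u n')` lies in `ι N ∩ X = 0`, so `n = u n'`. -/

open MvPolynomial Module

set_option maxHeartbeats 1000000
set_option synthInstance.maxHeartbeats 400000

noncomputable section

variable (k : Type) [Field k] (p : ℕ)

theorem IsPointOp.mem_mA {u : Amod k p} (hu : IsPointOp k p u) : u ∈ mA k p := by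
  obtain ⟨α, β, -, rfl⟩ := hu
  exact add_mem (Submodule.smul_of_tower_mem _ α (Ideal.subset_span (Set.mem_insert _ _)))
    (Submodule.smul_of_tower_mem _ β (Ideal.subset_span (Set.mem_insert_of_mem _ rfl)))

namespace Submodule

variable {R N E M : Type*} [CommRing R]
  [AddCommGroup N] [Module R N] [AddCommGroup E] [Module R E] [AddCommGroup M] [Module R M]
  {I : Ideal R}

theorem smul_top_eq_bot_of_surjective {π : E →ₗ[R] M} (hπ : Function.Surjective π)
    (hE : I • (⊤ : Submodule R E) = ⊥) : I • (⊤ : Submodule R M) = ⊥ := by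
  rw [← LinearMap.range_eq_top.mpr hπ, LinearMap.range_eq_map, ← map_smul'', hE, map_bot]

theorem smul_top_eq_bot_of_injective {ι : N →ₗ[R] E} (hι : Function.Injective ι)
    (hE : I • (⊤ : Submodule R E) = ⊥) : I • (⊤ : Submodule R N) = ⊥ := by
  refine map_injective_of_injective hι ?_
  rw [map_bot, eq_bot_iff, ← hE, map_smul'']
  exact smul_mono_right _ le_top

theorem range_lsmul_eq_smul_top_of_surjective {π : E →ₗ[R] M} (hπ : Function.Surjective π)
    {u : R} (hE : LinearMap.range (LinearMap.lsmul R E u) = I • ⊤) :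
    LinearMap.range (LinearMap.lsmul R M u) = I • ⊤ := by
  have hcomm : LinearMap.lsmul R M u ∘ₗ π = π ∘ₗ LinearMap.lsmul R E u := by
    ext e; exact (map_smul π u e).symm
  rw [← LinearMap.range_comp_of_range_eq_top _ (LinearMap.range_eq_top.mpr hπ), hcomm,
    LinearMap.range_comp, hE, map_smul'', ← LinearMap.range_eq_map,
    LinearMap.range_eq_top.mpr hπ]

variable {S : Type*} [Semiring S] [SMul S R] [Module S E] [IsScalarTower S R E]

theorem mem_range_lsmul_of_isCompl {ι : N →ₗ[R] E} (hι : Function.Injective ι) {u : R}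
    {X : Submodule S E} (hX : ∀ x ∈ X, u • x ∈ X)
    (hc : IsCompl ((LinearMap.range ι).restrictScalars S) X) {n : N}
    (hn : ι n ∈ LinearMap.range (LinearMap.lsmul R E u)) :
    n ∈ LinearMap.range (LinearMap.lsmul R N u) := by
  obtain ⟨e, he⟩ := hn
  obtain ⟨_, ⟨n', rfl⟩, x, hx, rfl⟩ := mem_sup.mp (hc.sup_eq_top ▸ mem_top : e ∈ _ ⊔ X)
  have hux_range : u • x ∈ (LinearMap.range ι).restrictScalars S := by
    have : u • x = ι (n - u • n') := by
      rw [map_sub, map_smul, ← he, LinearMap.lsmul_apply, smul_add, add_sub_cancel_left]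
    exact this ▸ LinearMap.mem_range_self ι _
  have hux : u • x = 0 := disjoint_def.mp hc.disjoint _ hux_range (hX x hx)
  refine ⟨n', hι ?_⟩
  rw [LinearMap.lsmul_apply, map_smul, ← he, LinearMap.lsmul_apply, smul_add, hux, add_zero]

theorem range_lsmul_eq_smul_top_of_isCompl {ι : N →ₗ[R] E} (hι : Function.Injective ι)
    {u : R} (hu : u ∈ I) {X : Submodule S E} (hX : ∀ x ∈ X, u • x ∈ X)
    (hc : IsCompl ((LinearMap.range ι).restrictScalars S) X)
    (hE : LinearMap.range (LinearMap.lsmul R E u) = I • ⊤) :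
    LinearMap.range (LinearMap.lsmul R N u) = I • ⊤ := by
  refine le_antisymm ?_ fun n hn => mem_range_lsmul_of_isCompl hι hX hc ?_
  · rintro _ ⟨n, rfl⟩
    exact smul_mem_smul hu mem_top
  · rw [hE]
    have : ι n ∈ (I • (⊤ : Submodule R N)).map ι := mem_map_of_mem hn
    rw [map_smul''] at this
    exact smul_mono_right I (le_top : map ι ⊤ ≤ ⊤) this

end Submodule

theorem EIPd_of_locally_split_extension
    (d : ℕ)
    (N E M : Type)
    [AddCommGroup N] [Module (Amod k p) N]
    [AddCommGroup E] [Module (Amod k p) E]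
    [Module k E] [IsScalarTower k (Amod k p) E]
    [AddCommGroup M] [Module (Amod k p) M]
    (ι : N →ₗ[Amod k p] E) (π : E →ₗ[Amod k p] M)
    (hι : Function.Injective ι) (hπ : Function.Surjective π)
    (hsplit : ∀ u : Amod k p, IsPointOp k p u →
      ∃ X : Submodule k E, (∀ x ∈ X, u • x ∈ X) ∧
        IsCompl ((LinearMap.range ι).restrictScalars k) X)
    (hE : EIPd k p d E) :
    EIPd k p d M ∧ EIPd k p d N := by
  obtain ⟨hEIP, hEd⟩ := hE
  refine ⟨⟨fun u hu => Submodule.range_lsmul_eq_smul_top_of_surjective hπ (hEIP u hu),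
      Submodule.smul_top_eq_bot_of_surjective hπ hEd⟩,
    ⟨fun u hu => ?_, Submodule.smul_top_eq_bot_of_injective hι hEd⟩⟩
  obtain ⟨X, hX, hc⟩ := hsplit u hu
  exact Submodule.range_lsmul_eq_smul_top_of_isCompl hι hu.mem_mA hX hc (hEIP u hu)

end
end
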